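/- Let G be a bipartite graph with a fixed bipartition V(G) = X_G ⊔ Y_G and with m edges. Suppose that for every integer r with 0 ≤ r ≤ m there exists a set U_r ⊆ V(G) with U_r ⊆ X_G or U_r ⊆ Y_G such that exactly r edges of G are incident to a vertex of U_r. Then there exists a positive integer N such that for every n ≥ N there is an integer z < n²/2 with the property that every 2-edge coloring E(K_{n,n}) = R ⊔ B with more than z edges in each color class contains, for every integer r with 0 ≤ r ≤ m, a copy of G having exactly r red edges and m − r blue edges. -/

import Mathlib

/-- The number of red edges in a 2-edge coloring of `K_{n,n}`.  The coloring is encoded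
as `c : Fin n → Fin n → Bool`, where `c v w = true` means that the edge between vertex `v`
of the first part and vertex `w` of the second part is red, and `c v w = false` means it
is blue. -/
def redTotal {n : ℕ} (c : Fin n → Fin n → Bool) : ℕ :=
  (Finset.univ.filter fun p : Fin n × Fin n => c p.1 p.2 = true).card

/-- The number of blue edges in a 2-edge coloring of `K_{n,n}`. -/
def blueTotal {n : ℕ} (c : Fin n → Fin n → Bool) : ℕ :=
  (Finset.univ.filter fun p : Fin n × Fin n => c p.1 p.2 = false).card

/-- `redB c u v = true` iff `u` and `v` lie in different parts of `K_{n,n}` and the edge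
between them is red (under the coloring `c : Fin n → Fin n → Bool`, where `c v w = true`
means the edge between vertex `v` of the first part and `w` of the second part is red). -/
def redB {n : ℕ} (c : Fin n → Fin n → Bool) : Fin n ⊕ Fin n → Fin n ⊕ Fin n → Bool
  | Sum.inl v, Sum.inr w => c v w
  | Sum.inr w, Sum.inl v => c v w
  | _, _ => false

/-- `blueB c u v = true` iff `u` and `v` lie in different parts of `K_{n,n}` and the edge
between them is blue. -/
def blueB {n : ℕ} (c : Fin n → Fin n → Bool) : Fin n ⊕ Fin n → Fin n ⊕ Fin n → Bool
  | Sum.inl v, Sum.inr w => !c v w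
  | Sum.inr w, Sum.inl v => !c v w
  | _, _ => false

/-- `crossB u v = true` iff `u` and `v` lie in different parts of `K_{n,n}`,
i.e. `u v` is an edge of `K_{n,n}`. -/
def crossB {n : ℕ} : Fin n ⊕ Fin n → Fin n ⊕ Fin n → Bool
  | Sum.inl _, Sum.inr _ => true
  | Sum.inr _, Sum.inl _ => true
  | _, _ => false

/-- A bipartite graph `G` with fixed bipartition is encoded by its two parts `α`, `β`
and its edge set `E : Finset (α × β)`.  `IsCopy E f` says that `f` realizes a copy of `G`
in `K_{n,n}` (a subgraph of `K_{n,n}` isomorphic to `G`): `f` is an injective map from the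
vertices of `G` to the vertices of `K_{n,n}` sending every edge of `G` to an edge of
`K_{n,n}`. -/
def IsCopy {n : ℕ} {α β : Type*} (E : Finset (α × β)) (f : α ⊕ β → Fin n ⊕ Fin n) : Prop :=
  Function.Injective f ∧ ∀ p ∈ E, crossB (f (Sum.inl p.1)) (f (Sum.inr p.2)) = true

/-- The number of red edges of the copy of the bipartite graph with edge set `E`
realized by `f` in `K_{n,n}` colored by `c`. -/
def edgeRedCount {n : ℕ} {α β : Type*} (c : Fin n → Fin n → Bool)
    (E : Finset (α × β)) (f : α ⊕ β → Fin n ⊕ Fin n) : ℕ :=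
  (E.filter fun p => redB c (f (Sum.inl p.1)) (f (Sum.inr p.2)) = true).card

/-- The number of blue edges of the copy of the bipartite graph with edge set `E`
realized by `f` in `K_{n,n}` colored by `c`. -/
def edgeBlueCount {n : ℕ} {α β : Type*} (c : Fin n → Fin n → Bool)
    (E : Finset (α × β)) (f : α ⊕ β → Fin n ⊕ Fin n) : ℕ :=
  (E.filter fun p => blueB c (f (Sum.inl p.1)) (f (Sum.inr p.2)) = true).card

/-
If each colour class of `K_{n,n}` has at least `n²/2` edges, a red edge `ij` and a blue edge
`i'j'` always give a two-coloured cherry through the edge `ij'` (centred at `i` if `ij'` is blue,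
at `j'` if it is red), so there are at least `n³/8` two-coloured cherries centred in one part,
say pairs of rows `i, i'` and a column `j` with `ij` red and `i'j` blue. Counting, for every
`k`-set `Y` of columns, the rows red to all of `Y` and the rows blue to all of `Y` (as in the
Kővári–Sós–Turán theorem) gives, for `n` large, `k` columns `Y` together with `k` rows completely
red to `Y` and `k` rows completely blue to `Y`. With `k` exceeding both parts of `G`, embed `U_r`
into the red rows, the rest of its part into the blue rows and the other part into `Y`: the
edges incident to `U_r` become red and all others blue, so the copy has exactly `r` red edges.
-/

open Finset Function

section Cherries

variable {ι κ : Type*} [Fintype ι] [Fintype κ]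

def bicoloredCherries (c : ι → κ → Bool) : ℕ :=
  ∑ i, #{j | c i j = true} * #{j | c i j = false}

lemma sum_card_filter_and_eq_bicoloredCherries_swap (c : ι → κ → Bool) :
    ∑ p : ι × ι, #{j | c p.1 j = true ∧ c p.2 j = false} = bicoloredCherries (swap c) := by
  unfold bicoloredCherries
  simp_rw [← card_product, ← univ_product_univ, ← filter_product, card_filter]
  exact sum_comm

end Cherries

section Totals

variable {n : ℕ}

lemma redTotal_eq_sum (c : Fin n → Fin n → Bool) : redTotal c = ∑ i, #{j | c i j = true} := by
  simp only [redTotal, card_filter, Fintype.sum_prod_type]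

lemma blueTotal_eq_sum (c : Fin n → Fin n → Bool) : blueTotal c = ∑ j, #{i | c i j = false} := by
  simp only [blueTotal, card_filter, Fintype.sum_prod_type_right]

lemma redTotal_mul_blueTotal_le (c : Fin n → Fin n → Bool) :
    redTotal c * blueTotal c ≤ n * (bicoloredCherries c + bicoloredCherries (swap c)) := by
  set r : Fin n → ℕ := fun i => #{j | c i j = true}
  set b : Fin n → ℕ := fun j => #{i | c i j = false}
  calc redTotal c * blueTotal c = ∑ i, ∑ j, r i * b j := by
        rw [redTotal_eq_sum, blueTotal_eq_sum, sum_mul_sum]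
    _ ≤ ∑ i, ∑ j, n * ((if c i j = false then r i else 0) + (if c i j = true then b j else 0)) := by
        refine sum_le_sum fun i _ => sum_le_sum fun j _ => ?_
        have hr : r i ≤ n := (card_le_univ _).trans_eq (Fintype.card_fin n)
        have hb : b j ≤ n := (card_le_univ _).trans_eq (Fintype.card_fin n)
        cases c i j
        · simpa [mul_comm n] using Nat.mul_le_mul_left (r i) hb
        · simpa using Nat.mul_le_mul_right (b j) hr
    _ = n * (bicoloredCherries c + bicoloredCherries (swap c)) := by
        simp only [← mul_sum, sum_add_distrib]
        rw [sum_comm (f := fun i j => if c i j = true then b j else 0)]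
        simp only [← sum_filter, sum_const, smul_eq_mul, bicoloredCherries, swap]
        congr 2
        exact sum_congr rfl fun i _ => mul_comm _ _

end Totals

section Counting

variable {σ : Type*} (s : Finset σ) (a : σ → ℕ) {M : ℕ}

lemma card_le_sixteen_mul_card_filter (ha : ∀ q ∈ s, a q ≤ M)
    (hsum : #s * M ≤ 8 * ∑ q ∈ s, a q) : #s ≤ 16 * #{q ∈ s | M ≤ 16 * a q} := by
  rcases M.eq_zero_or_pos with rfl | hM
  · rw [filter_true_of_mem fun q _ => Nat.zero_le _]
    omega
  set P := {q ∈ s | M ≤ 16 * a q}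
  have hbig : ∑ q ∈ P, a q ≤ #P * M :=
    (sum_le_card_nsmul _ _ _ fun q hq => ha q (mem_filter.1 hq).1).trans_eq (smul_eq_mul ..)
  have hsmall : 16 * ∑ q ∈ s with ¬M ≤ 16 * a q, a q ≤ #s * M :=
    calc 16 * ∑ q ∈ s with ¬M ≤ 16 * a q, a q = ∑ q ∈ s with ¬M ≤ 16 * a q, 16 * a q := mul_sum ..
      _ ≤ #{q ∈ s | ¬M ≤ 16 * a q} • M :=
        sum_le_card_nsmul _ _ _ fun q hq => (not_le.1 (mem_filter.1 hq).2).le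
      _ ≤ #s * M := by rw [smul_eq_mul]; gcongr; exact filter_subset ..
  have hsplit : ∑ q ∈ P, a q + ∑ q ∈ s with ¬M ≤ 16 * a q, a q = ∑ q ∈ s, a q :=
    sum_filter_add_sum_filter_not ..
  exact le_of_mul_le_mul_right (by nlinarith) hM

lemma pow_le_pow_mul_descFactorial {x k : ℕ} (hx : M ≤ 16 * x) (hk : 32 * k ≤ M) :
    M ^ k ≤ 32 ^ k * x.descFactorial k :=
  calc M ^ k ≤ (32 * (x + 1 - k)) ^ k := Nat.pow_le_pow_left (by omega) k
    _ = 32 ^ k * (x + 1 - k) ^ k := mul_pow ..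
    _ ≤ 32 ^ k * x.descFactorial k := Nat.mul_le_mul_left _ (Nat.pow_sub_le_descFactorial x k)

lemma card_mul_pow_le_sum_descFactorial {k : ℕ} (ha : ∀ q ∈ s, a q ≤ M)
    (hsum : #s * M ≤ 8 * ∑ q ∈ s, a q) (hk : 32 * k ≤ M) :
    #s * M ^ k ≤ 16 * 32 ^ k * ∑ q ∈ s, (a q).descFactorial k :=
  calc #s * M ^ k ≤ 16 * (#{q ∈ s | M ≤ 16 * a q} • M ^ k) := by
        rw [smul_eq_mul, ← mul_assoc]
        exact Nat.mul_le_mul_right _ (card_le_sixteen_mul_card_filter s a ha hsum)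
    _ ≤ 16 * ∑ q ∈ s with M ≤ 16 * a q, 32 ^ k * (a q).descFactorial k := by
        gcongr
        exact card_nsmul_le_sum _ _ _ fun q hq => pow_le_pow_mul_descFactorial (mem_filter.1 hq).2 hk
    _ ≤ 16 * 32 ^ k * ∑ q ∈ s, (a q).descFactorial k := by
        rw [mul_assoc, ← mul_sum]
        gcongr
        exact filter_subset ..

end Counting

lemma le_and_le_of_pred_mul_lt_mul {x y k n : ℕ} (hx : x ≤ n) (hy : y ≤ n)
    (h : (k - 1) * n < x * y) : k ≤ x ∧ k ≤ y := by
  by_contra! hk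
  by_cases hxk : k ≤ x
  · exact h.not_ge ((Nat.mul_le_mul hx (Nat.le_pred_of_lt (hk hxk))).trans_eq (mul_comm ..))
  · exact h.not_ge (Nat.mul_le_mul (Nat.le_pred_of_lt (not_le.1 hxk)) hy)

section Biclique

variable {ι κ : Type*} [Fintype ι] [Fintype κ]

lemma sum_card_mul_card_eq_sum_choose (c : ι → κ → Bool) (k : ℕ) :
    ∑ Y ∈ powersetCard k univ,
        #{i | ∀ j ∈ Y, c i j = true} * #{i | ∀ j ∈ Y, c i j = false} =
      ∑ p : ι × ι, (#{j | c p.1 j = true ∧ c p.2 j = false}).choose k := by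
  have hpairs : ∀ Y : Finset κ, #{i | ∀ j ∈ Y, c i j = true} * #{i | ∀ j ∈ Y, c i j = false} =
      #{p : ι × ι | ∀ j ∈ Y, c p.1 j = true ∧ c p.2 j = false} := by
    intro Y
    rw [← card_product, ← univ_product_univ, ← filter_product]
    simp only [forall_and]
  have hsubsets : ∀ p : ι × ι, (#{j | c p.1 j = true ∧ c p.2 j = false}).choose k =
      #{Y ∈ powersetCard k univ | ∀ j ∈ Y, c p.1 j = true ∧ c p.2 j = false} := by
    intro p
    rw [← card_powersetCard]
    congr 1
    ext Y
    simp only [mem_powersetCard, mem_filter, true_and, subset_iff, mem_univ]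
    tauto
  calc _ = ∑ Y ∈ powersetCard k univ, #{p : ι × ι | ∀ j ∈ Y, c p.1 j = true ∧ c p.2 j = false} :=
        sum_congr rfl fun Y _ => hpairs Y
    _ = _ := by
        simp only [hsubsets]
        simp only [card_filter]
        exact sum_comm

lemma exists_biclique_of_lt_sum_descFactorial {k : ℕ} (c : ι → κ → Bool)
    (h : Fintype.card κ ^ k * ((k - 1) * Fintype.card ι) <
      ∑ p : ι × ι, (#{j | c p.1 j = true ∧ c p.2 j = false}).descFactorial k) :
    ∃ Y ∈ powersetCard k univ,
      k ≤ #{i | ∀ j ∈ Y, c i j = true} ∧ k ≤ #{i | ∀ j ∈ Y, c i j = false} := by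
  by_contra! hno
  have hY : ∀ Y ∈ powersetCard k univ, #{i | ∀ j ∈ Y, c i j = true} *
      #{i | ∀ j ∈ Y, c i j = false} ≤ (k - 1) * Fintype.card ι := by
    refine fun Y hY => not_lt.1 fun hlt => ?_
    obtain ⟨hR, hB⟩ := le_and_le_of_pred_mul_lt_mul (card_le_univ _) (card_le_univ _) hlt
    exact (hno Y hY hR).not_ge hB
  refine h.not_ge ?_
  simp_rw [Nat.descFactorial_eq_factorial_mul_choose, ← mul_sum, ← sum_card_mul_card_eq_sum_choose]
  calc _ ≤ k.factorial * ((Fintype.card κ).choose k * ((k - 1) * Fintype.card ι)) := by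
        gcongr
        simpa using sum_le_card_nsmul _ _ _ hY
    _ ≤ Fintype.card κ ^ k * ((k - 1) * Fintype.card ι) := by
        rw [← mul_assoc, ← Nat.descFactorial_eq_factorial_mul_choose]
        gcongr
        exact Nat.descFactorial_le_pow _ k

theorem exists_red_blue_biclique_of_bicoloredCherries {n k : ℕ} (hι : Fintype.card ι = n)
    (hκ : Fintype.card κ = n) (hk : 0 < k) (hn : 32 ^ (k + 1) * k ≤ n) (c : ι → κ → Bool)
    (hc : n ^ 3 ≤ 8 * bicoloredCherries (swap c)) :
    ∃ X₁ X₂ : Finset ι, ∃ Y : Finset κ, k ≤ #X₁ ∧ k ≤ #X₂ ∧ #Y = k ∧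
      (∀ i ∈ X₁, ∀ j ∈ Y, c i j = true) ∧ (∀ i ∈ X₂, ∀ j ∈ Y, c i j = false) := by
  set a : ι × ι → ℕ := fun p => #{j | c p.1 j = true ∧ c p.2 j = false}
  have hlower : n ^ 2 * n ^ k ≤ 16 * 32 ^ k * ∑ p, (a p).descFactorial k := by
    have := card_mul_pow_le_sum_descFactorial univ a (M := n) (k := k)
      (fun p _ => hκ ▸ card_le_univ _) ?_ ?_
    · simpa [sq, hι] using this
    · rw [sum_card_filter_and_eq_bicoloredCherries_swap, card_univ, Fintype.card_prod, hι,
        ← pow_two, ← pow_succ]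
      exact hc
    · exact (Nat.mul_le_mul_right k (Nat.le_self_pow (by omega) 32)).trans hn
  obtain ⟨Y, hY, hR, hB⟩ := exists_biclique_of_lt_sum_descFactorial c <| by
    rw [hι, hκ]
    by_contra! hsum
    have : n * n ^ (k + 1) ≤ 16 * 32 ^ k * (k - 1) * n ^ (k + 1) :=
      calc n * n ^ (k + 1) = n ^ 2 * n ^ k := by ring
        _ ≤ 16 * 32 ^ k * (n ^ k * ((k - 1) * n)) := hlower.trans (by gcongr)
        _ = 16 * 32 ^ k * (k - 1) * n ^ (k + 1) := by ring
    have hn' := Nat.le_of_mul_le_mul_right this (pow_pos (lt_of_lt_of_le (by positivity) hn) _)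
    rw [pow_succ] at hn
    nlinarith [Nat.sub_le k 1, mul_pos (pow_pos (show 0 < 32 by norm_num) k) hk]
  exact ⟨_, _, Y, hR, hB, (mem_powersetCard.1 hY).2, fun i hi => (mem_filter.1 hi).2,
    fun i hi => (mem_filter.1 hi).2⟩

end Biclique


section Block

variable {n : ℕ} (c : Fin n → Fin n → Bool)

lemma redB_swap (u v : Fin n ⊕ Fin n) : redB (swap c) u v = redB c u.swap v.swap := by
  cases u <;> cases v <;> rfl

lemma blueB_swap (u v : Fin n ⊕ Fin n) : blueB (swap c) u v = blueB c u.swap v.swap := by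
  cases u <;> cases v <;> rfl

structure IsRedBlueBlock (A₁ A₂ B : Finset (Fin n ⊕ Fin n)) : Prop where
  disjoint : Disjoint A₁ A₂
  red : ∀ u ∈ A₁, ∀ v ∈ B, redB c u v = true
  blue : ∀ u ∈ A₂, ∀ v ∈ B, blueB c u v = true

lemma isRedBlueBlock_map_inl {X₁ X₂ Y : Finset (Fin n)} (hY : Y.Nonempty)
    (h₁ : ∀ i ∈ X₁, ∀ j ∈ Y, c i j = true) (h₂ : ∀ i ∈ X₂, ∀ j ∈ Y, c i j = false) :
    IsRedBlueBlock c (X₁.map .inl) (X₂.map .inl) (Y.map .inr) := by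
  obtain ⟨j₀, hj₀⟩ := hY
  refine ⟨(disjoint_map _).2 (disjoint_left.2 fun i hi₁ hi₂ => ?_), ?_, ?_⟩
  · simpa [h₁ i hi₁ j₀ hj₀] using h₂ i hi₂ j₀ hj₀
  · simp only [forall_mem_map]
    exact h₁
  · simp only [forall_mem_map]
    intro i hi j hj
    simp [blueB, h₂ i hi j hj]

lemma IsRedBlueBlock.map_sumComm {A₁ A₂ B : Finset (Fin n ⊕ Fin n)}
    (h : IsRedBlueBlock (swap c) A₁ A₂ B) :
    IsRedBlueBlock c (A₁.map (Equiv.sumComm _ _).toEmbedding)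
      (A₂.map (Equiv.sumComm _ _).toEmbedding) (B.map (Equiv.sumComm _ _).toEmbedding) := by
  refine ⟨(disjoint_map _).2 h.disjoint, fun u hu v hv => ?_, fun u hu v hv => ?_⟩
  · simpa [redB_swap] using h.red _ (mem_map_equiv.1 hu) _ (mem_map_equiv.1 hv)
  · simpa [blueB_swap] using h.blue _ (mem_map_equiv.1 hu) _ (mem_map_equiv.1 hv)

theorem exists_isRedBlueBlock {k : ℕ} (hk : 0 < k) (hn : 32 ^ (k + 1) * k ≤ n)
    (hr : n ^ 2 ≤ 2 * redTotal c) (hb : n ^ 2 ≤ 2 * blueTotal c) :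
    ∃ A₁ A₂ B : Finset (Fin n ⊕ Fin n),
      k ≤ #A₁ ∧ k ≤ #A₂ ∧ k ≤ #B ∧ IsRedBlueBlock c A₁ A₂ B := by
  have hn0 : 0 < n := lt_of_lt_of_le (by positivity) hn
  have hcherries : n ^ 3 ≤ 4 * (bicoloredCherries c + bicoloredCherries (swap c)) := by
    refine Nat.le_of_mul_le_mul_left ?_ hn0
    calc n * n ^ 3 = n ^ 2 * n ^ 2 := by ring
      _ ≤ 2 * redTotal c * (2 * blueTotal c) := Nat.mul_le_mul hr hb
      _ ≤ 4 * (n * (bicoloredCherries c + bicoloredCherries (swap c))) := by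
        have := redTotal_mul_blueTotal_le c
        nlinarith
      _ = n * (4 * (bicoloredCherries c + bicoloredCherries (swap c))) := by ring
  rcases le_or_gt (n ^ 3) (8 * bicoloredCherries (swap c)) with hcol | hrow
  · obtain ⟨X₁, X₂, Y, hX₁, hX₂, hY, h₁, h₂⟩ := exists_red_blue_biclique_of_bicoloredCherries
      (Fintype.card_fin n) (Fintype.card_fin n) hk hn c hcol
    exact ⟨_, _, _, by simpa using hX₁, by simpa using hX₂, by simp [hY],
      isRedBlueBlock_map_inl c (card_pos.1 (hY ▸ hk)) h₁ h₂⟩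
  · obtain ⟨X₁, X₂, Y, hX₁, hX₂, hY, h₁, h₂⟩ := exists_red_blue_biclique_of_bicoloredCherries
      (Fintype.card_fin n) (Fintype.card_fin n) hk hn (swap c)
      (by rw [show swap (swap c) = c from rfl]; omega)
    exact ⟨_, _, _, by simpa using hX₁, by simpa using hX₂, by simp [hY],
      (isRedBlueBlock_map_inl (swap c) (card_pos.1 (hY ▸ hk)) h₁ h₂).map_sumComm⟩

end Block

section Copies

variable {n : ℕ} {c : Fin n → Fin n → Bool}

lemma redB_comm (u v : Fin n ⊕ Fin n) : redB c u v = redB c v u := by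
  cases u <;> cases v <;> rfl

lemma crossB_comm (u v : Fin n ⊕ Fin n) : crossB u v = crossB v u := by
  cases u <;> cases v <;> rfl

lemma crossB_self (u : Fin n ⊕ Fin n) : crossB u u = false := by
  cases u <;> rfl

lemma crossB_of_redB {u v : Fin n ⊕ Fin n} (h : redB c u v = true) : crossB u v = true := by
  cases u <;> cases v <;> first | rfl | exact h

lemma crossB_of_blueB {u v : Fin n ⊕ Fin n} (h : blueB c u v = true) : crossB u v = true := by
  cases u <;> cases v <;> first | rfl | exact h

lemma blueB_eq_not_redB {u v : Fin n ⊕ Fin n} (h : crossB u v = true) :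
    blueB c u v = !redB c u v := by
  cases u <;> cases v <;> first | rfl | exact absurd h Bool.false_ne_true

lemma edgeRedCount_add_edgeBlueCount {α β : Type*} {E : Finset (α × β)}
    {f : α ⊕ β → Fin n ⊕ Fin n} (hf : IsCopy E f) :
    edgeRedCount c E f + edgeBlueCount c E f = #E := by
  rw [edgeRedCount, edgeBlueCount, ← card_filter_add_card_filter_not (s := E)
    (fun p => redB c (f (.inl p.1)) (f (.inr p.2)) = true)]
  congr 2
  exact filter_congr fun p hp => by simp [blueB_eq_not_redB (hf.2 p hp)]

lemma exists_injective_mem_ite {γ V : Type*} [Fintype γ] (p : γ → Prop) [DecidablePred p]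
    {A₁ A₂ : Finset V} (hd : Disjoint A₁ A₂) (h₁ : Fintype.card γ ≤ #A₁)
    (h₂ : Fintype.card γ ≤ #A₂) :
    ∃ g : γ → V, Injective g ∧ ∀ x, g x ∈ if p x then A₁ else A₂ := by
  obtain ⟨e₁, he₁⟩ := Embedding.exists_of_card_le_finset h₁
  obtain ⟨e₂, he₂⟩ := Embedding.exists_of_card_le_finset h₂
  have hmem : ∀ x, (if p x then e₁ x else e₂ x) ∈ if p x then A₁ else A₂ := fun x => by
    split_ifs
    exacts [he₁ (Set.mem_range_self x), he₂ (Set.mem_range_self x)]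
  refine ⟨fun x => if p x then e₁ x else e₂ x, fun x y hxy => ?_, hmem⟩
  dsimp only at hxy
  have hx := hmem x
  have hy := hmem y
  rw [hxy] at hx
  by_cases px : p x <;> by_cases py : p y <;> simp only [px, py, if_true, if_false] at hxy hx hy
  · exact e₁.injective hxy
  · exact absurd hy (disjoint_left.1 hd hx)
  · exact absurd hx (disjoint_left.1 hd hy)
  · exact e₂.injective hxy

namespace IsRedBlueBlock

variable {A₁ A₂ B : Finset (Fin n ⊕ Fin n)} (h : IsRedBlueBlock c A₁ A₂ B)
include h

lemma crossB_of_mem_ite {P : Prop} [Decidable P] {u v : Fin n ⊕ Fin n}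
    (hu : u ∈ if P then A₁ else A₂) (hv : v ∈ B) : crossB u v = true := by
  split_ifs at hu
  exacts [crossB_of_redB (h.red u hu v hv), crossB_of_blueB (h.blue u hu v hv)]

lemma redB_eq_true_iff {P : Prop} [Decidable P] {u v : Fin n ⊕ Fin n}
    (hu : u ∈ if P then A₁ else A₂) (hv : v ∈ B) : redB c u v = true ↔ P := by
  have hblue := blueB_eq_not_redB (c := c) (h.crossB_of_mem_ite hu hv)
  split_ifs at hu with hP
  · simp [hP, h.red u hu v hv]
  · simpa [hP, h.blue u hu v hv] using hblue

variable {α β : Type*} [Fintype α] [Fintype β] (E : Finset (α × β))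

lemma exists_copy_edgeRedCount_eq_left [DecidableEq α] (U : Finset α)
    (h₁ : Fintype.card α ≤ #A₁) (h₂ : Fintype.card α ≤ #A₂) (hB : Fintype.card β ≤ #B) :
    ∃ f, IsCopy E f ∧ edgeRedCount c E f = #{p ∈ E | p.1 ∈ U} := by
  obtain ⟨g, hg, hgA⟩ := exists_injective_mem_ite (· ∈ U) h.disjoint h₁ h₂
  obtain ⟨e, he⟩ := Embedding.exists_of_card_le_finset hB
  have heB : ∀ b, e b ∈ B := fun b => he (Set.mem_range_self b)
  have hcross : ∀ a b, crossB (g a) (e b) = true := fun a b => h.crossB_of_mem_ite (hgA a) (heB b)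
  refine ⟨Sum.elim g e, ⟨hg.sumElim e.injective fun a b hab => ?_, fun p _ => hcross p.1 p.2⟩,
    congrArg card (filter_congr fun p _ => h.redB_eq_true_iff (hgA p.1) (heB p.2))⟩
  simpa [hab, crossB_self] using hcross a b

lemma exists_copy_edgeRedCount_eq_right [DecidableEq β] (U : Finset β)
    (h₁ : Fintype.card β ≤ #A₁) (h₂ : Fintype.card β ≤ #A₂) (hB : Fintype.card α ≤ #B) :
    ∃ f, IsCopy E f ∧ edgeRedCount c E f = #{p ∈ E | p.2 ∈ U} := by
  obtain ⟨g, hg, hgA⟩ := exists_injective_mem_ite (· ∈ U) h.disjoint h₁ h₂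
  obtain ⟨e, he⟩ := Embedding.exists_of_card_le_finset hB
  have heB : ∀ a, e a ∈ B := fun a => he (Set.mem_range_self a)
  have hcross : ∀ a b, crossB (e a) (g b) = true := fun a b => by
    rw [crossB_comm]
    exact h.crossB_of_mem_ite (hgA b) (heB a)
  refine ⟨Sum.elim e g, ⟨e.injective.sumElim hg fun a b hab => ?_, fun p _ => hcross p.1 p.2⟩,
    congrArg card (filter_congr fun p _ => ?_)⟩
  · simpa [hab, crossB_self] using hcross a b
  · rw [Sum.elim_inl, Sum.elim_inr, redB_comm]
    exact h.redB_eq_true_iff (hgA p.2) (heB p.1)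

end IsRedBlueBlock

end Copies

/-- Sufficiency for bipartite omnitonality.  Let `G` be a bipartite graph with fixed
bipartition `X_G ⊔ Y_G` (parts `α` and `β`, edge set `E`) and `m` edges.  Suppose that for
every `0 ≤ r ≤ m` there is a set `U_r` contained in one of the two parts of `G` such that
exactly `r` edges of `G` are incident to a vertex of `U_r`.  Then there is `N` such that
for every `n ≥ N` there is an integer `z < n²/2` such that every 2-edge coloring of
`K_{n,n}` with more than `z` edges in each color class contains, for every `0 ≤ r ≤ m`,
a copy of `G` with exactly `r` red edges and `m - r` blue edges. -/
theorem bipartite_omnitonal_sufficiency {α β : Type*} [Fintype α] [Fintype β]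
    [DecidableEq α] [DecidableEq β] (E : Finset (α × β)) (m : ℕ) (hm : E.card = m)
    (hU : ∀ r : ℕ, r ≤ m →
      (∃ U : Finset α, (E.filter fun p => p.1 ∈ U).card = r) ∨
      (∃ U : Finset β, (E.filter fun p => p.2 ∈ U).card = r)) :
    ∃ N : ℕ, 0 < N ∧ ∀ n : ℕ, N ≤ n → ∃ z : ℕ, 2 * z < n ^ 2 ∧
      ∀ c : Fin n → Fin n → Bool, z < redTotal c → z < blueTotal c →
        ∀ r : ℕ, r ≤ m →
          ∃ f : α ⊕ β → Fin n ⊕ Fin n, IsCopy E f ∧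
            edgeRedCount c E f = r ∧ edgeBlueCount c E f = m - r := by
  set k := max (Fintype.card α) (Fintype.card β) + 1
  have hα : Fintype.card α ≤ k := Nat.le_succ_of_le (le_max_left ..)
  have hβ : Fintype.card β ≤ k := Nat.le_succ_of_le (le_max_right ..)
  refine ⟨32 ^ (k + 1) * k, by positivity, fun n hn => ⟨(n ^ 2 - 1) / 2, ?_, fun c hr hb r hrm => ?_⟩⟩
  · have : 0 < n ^ 2 := pow_pos (lt_of_lt_of_le (by positivity) hn) 2
    omega
  obtain ⟨A₁, A₂, B, h₁, h₂, hB, hblock⟩ :=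
    exists_isRedBlueBlock c (Nat.succ_pos _) hn (by omega) (by omega)
  obtain ⟨f, hf, hfr⟩ : ∃ f, IsCopy E f ∧ edgeRedCount c E f = r := by
    rcases hU r hrm with ⟨U, hUr⟩ | ⟨U, hUr⟩
    · obtain ⟨f, hf, hfr⟩ := hblock.exists_copy_edgeRedCount_eq_left E U
        (hα.trans h₁) (hα.trans h₂) (hβ.trans hB)
      exact ⟨f, hf, hfr.trans hUr⟩
    · obtain ⟨f, hf, hfr⟩ := hblock.exists_copy_edgeRedCount_eq_right E U
        (hβ.trans h₁) (hβ.trans h₂) (hα.trans hB)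
      exact ⟨f, hf, hfr.trans hUr⟩
  have := edgeRedCount_add_edgeBlueCount (c := c) hf
  exact ⟨f, hf, hfr, by omega⟩
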